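/- arXiv:2406.04283 — 6 statements merged into one kernel-verified Lean document; each statement's English description precedes it below -/
import Mathlib

section
/- Fix an integer n ≥ 3, a real number l > 0, and a constant C > 0. Let I : (0, l) → ℝ be a function satisfying |I(s)| ≤ C for all s ∈ (0, l), and suppose the function s ↦ I(s) + C s is monotone increasing on (0, l). Then the function s ↦ G(l − s)^{n−1} I(s) + C n G(l)^{n−1} s is monotone increasing on (0, l). -/
open Real MeasureTheory Filter Set

/-- `F n z = ∫_1^z ζ⁻¹ (1 - ζ⁻ⁿ)^{-1/2} dζ`. -/
noncomputable def F (n : ℕ) (z : ℝ) : ℝ :=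
  ∫ ζ in (1:ℝ)..z, ζ⁻¹ * (1 - (ζ ^ n)⁻¹) ^ (-(1/2) : ℝ)

/-- Fix an integer `n ≥ 3`, a real number `l > 0`, and a constant `C > 0`. Let
`I : (0, l) → ℝ` be a function satisfying `|I(s)| ≤ C` for all `s ∈ (0, l)`, and suppose
the function `s ↦ I(s) + C s` is monotone increasing on `(0, l)`. Then the function
`s ↦ G(l - s)^{n-1} I(s) + C n G(l)^{n-1} s` is monotone increasing on `(0, l)`.
Here `G` is the inverse function of `F`, satisfying `G'(s) = G(s)(1 - G(s)⁻ⁿ)^{1/2}`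
for all `s > 0`. -/
theorem stmt_8 (n : ℕ) (hn : 3 ≤ n) (l C : ℝ) (hl : 0 < l) (hC : 0 < C) (G : ℝ → ℝ)
    (hG1 : ∀ s : ℝ, 0 < s → 1 < G s)
    (hGF : ∀ s : ℝ, 0 < s → F n (G s) = s)
    (hFG : ∀ z : ℝ, 1 < z → G (F n z) = z)
    (hG' : ∀ s : ℝ, 0 < s → HasDerivAt G (G s * Real.sqrt (1 - (G s ^ n)⁻¹)) s)
    (I : ℝ → ℝ)
    (hIbd : ∀ s ∈ Set.Ioo 0 l, |I s| ≤ C)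
    (hImono : MonotoneOn (fun s => I s + C * s) (Set.Ioo 0 l)) :
    MonotoneOn (fun s => G (l - s) ^ (n - 1) * I s + C * n * G l ^ (n - 1) * s)
      (Set.Ioo 0 l) := by
  have hGpos : ∀ s : ℝ, 0 < s → 0 < G s := fun s hs => lt_trans one_pos (hG1 s hs)
  have hsqrt1 : ∀ s : ℝ, 0 < s → Real.sqrt (1 - (G s ^ n)⁻¹) ≤ 1 := by
    intro s hs
    have h0 : 0 ≤ (G s ^ n)⁻¹ := inv_nonneg.2 (pow_nonneg (hGpos s hs).le n)
    exact Real.sqrt_le_one.mpr (by linarith)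
  -- G monotone on (0, ∞)
  have hGmono : MonotoneOn G (Set.Ioi 0) := by
    apply monotoneOn_of_deriv_nonneg (convex_Ioi 0)
    · exact fun s hs => ((hG' s hs).continuousAt).continuousWithinAt
    · rw [interior_Ioi]
      exact fun s hs => ((hG' s hs).differentiableAt).differentiableWithinAt
    · rw [interior_Ioi]
      intro s hs
      rw [(hG' s hs).deriv]
      have := (hGpos s hs).le
      positivity
  -- Auxiliary monotone function
  have key : MonotoneOn (fun s => G (l - s) ^ (n - 1) + ((n : ℝ) - 1) * G l ^ (n - 1) * s)
      (Set.Ioo 0 l) := by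
    apply monotoneOn_of_deriv_nonneg (convex_Ioo 0 l)
    · apply ContinuousOn.add
      · intro s hs
        have hls : 0 < l - s := by simp only [Set.mem_Ioo] at hs; linarith [hs.2]
        have h1 : HasDerivAt (fun s : ℝ => G (l - s))
            (G (l - s) * Real.sqrt (1 - (G (l - s) ^ n)⁻¹) * (-1)) s :=
          (hG' (l - s) hls).comp s ((hasDerivAt_id s).const_sub l)
        exact ((h1.pow (n - 1)).continuousAt).continuousWithinAt
      · fun_prop
    · rw [interior_Ioo]
      intro s hs
      have hls : 0 < l - s := by simp only [Set.mem_Ioo] at hs; linarith [hs.2]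
      have h1 : HasDerivAt (fun s : ℝ => G (l - s))
          (G (l - s) * Real.sqrt (1 - (G (l - s) ^ n)⁻¹) * (-1)) s :=
        (hG' (l - s) hls).comp s ((hasDerivAt_id s).const_sub l)
      exact (((h1.pow (n - 1)).add ((hasDerivAt_id s).const_mul
        (((n : ℝ) - 1) * G l ^ (n - 1)))).differentiableAt).differentiableWithinAt
    · rw [interior_Ioo]
      intro s hs
      have hls : 0 < l - s := by simp only [Set.mem_Ioo] at hs; linarith [hs.2]
      have h1 : HasDerivAt (fun s : ℝ => G (l - s))
          (G (l - s) * Real.sqrt (1 - (G (l - s) ^ n)⁻¹) * (-1)) s :=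
        (hG' (l - s) hls).comp s ((hasDerivAt_id s).const_sub l)
      have h2 : HasDerivAt (fun s => G (l - s) ^ (n - 1) + ((n : ℝ) - 1) * G l ^ (n - 1) * s)
          ((n - 1 : ℕ) * G (l - s) ^ (n - 1 - 1) *
            (G (l - s) * Real.sqrt (1 - (G (l - s) ^ n)⁻¹) * (-1)) +
            ((n : ℝ) - 1) * G l ^ (n - 1) * 1) s := by
        exact (h1.pow (n - 1)).add (((hasDerivAt_id s).const_mul
          (((n : ℝ) - 1) * G l ^ (n - 1))).congr_deriv (by ring))
      rw [h2.deriv]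
      have hGls : 1 < G (l - s) := hG1 _ hls
      have hGl : 1 < G l := hG1 _ hl
      have hle : G (l - s) ≤ G l := hGmono hls hl (by linarith [hs.1])
      have hpow : G (l - s) ^ (n - 1 - 1) * G (l - s) = G (l - s) ^ (n - 1) := by
        rw [← pow_succ]
        congr 1
        omega
      have hs1 : Real.sqrt (1 - (G (l - s) ^ n)⁻¹) ≤ 1 := hsqrt1 _ hls
      have hs0 : 0 ≤ Real.sqrt (1 - (G (l - s) ^ n)⁻¹) := Real.sqrt_nonneg _
      have hpowle : G (l - s) ^ (n - 1) ≤ G l ^ (n - 1) :=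
        pow_le_pow_left₀ (by linarith) hle _
      have hcast : ((n - 1 : ℕ) : ℝ) = (n : ℝ) - 1 := by
        have : 1 ≤ n := by omega
        push_cast [Nat.cast_sub this]
        ring
      rw [hcast]
      have hn1 : (0 : ℝ) ≤ (n : ℝ) - 1 := by
        have : (3 : ℝ) ≤ (n : ℝ) := by exact_mod_cast hn
        linarith
      have hb : G (l - s) ^ (n - 1 - 1) * (G (l - s) * Real.sqrt (1 - (G (l - s) ^ n)⁻¹))
          ≤ G l ^ (n - 1) := by
        calc G (l - s) ^ (n - 1 - 1) * (G (l - s) * Real.sqrt (1 - (G (l - s) ^ n)⁻¹))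
            ≤ G (l - s) ^ (n - 1 - 1) * (G (l - s) * 1) := by
              apply mul_le_mul_of_nonneg_left _ (by positivity)
              apply mul_le_mul_of_nonneg_left hs1 (by linarith)
          _ = G (l - s) ^ (n - 1) := by rw [mul_one, hpow]
          _ ≤ G l ^ (n - 1) := hpowle
      nlinarith [mul_le_mul_of_nonneg_left hb hn1]
  -- Main combination
  intro x hx y hy hxy
  simp only
  have hgx1 : 1 < G (l - x) := hG1 _ (by simp only [Set.mem_Ioo] at hx; linarith [hx.2])
  have hgy1 : 1 < G (l - y) := hG1 _ (by simp only [Set.mem_Ioo] at hy; linarith [hy.2])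
  have hgyx : G (l - y) ≤ G (l - x) := by
    apply hGmono
    · simp only [Set.mem_Ioo] at hy; exact Set.mem_Ioi.2 (by linarith [hy.2])
    · simp only [Set.mem_Ioo] at hx; exact Set.mem_Ioi.2 (by linarith [hx.2])
    · linarith
  have hgyl : G (l - y) ≤ G l := by
    apply hGmono
    · simp only [Set.mem_Ioo] at hy; exact Set.mem_Ioi.2 (by linarith [hy.2])
    · exact Set.mem_Ioi.2 hl
    · simp only [Set.mem_Ioo] at hy; linarith [hy.1]
  have hpyx : G (l - y) ^ (n - 1) ≤ G (l - x) ^ (n - 1) :=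
    pow_le_pow_left₀ (by linarith) hgyx _
  have hpyl : G (l - y) ^ (n - 1) ≤ G l ^ (n - 1) :=
    pow_le_pow_left₀ (by linarith) hgyl _
  have hpy1 : (1 : ℝ) ≤ G (l - y) ^ (n - 1) := one_le_pow₀ hgy1.le
  have hkey := key hx hy hxy
  simp only at hkey
  have hI := hImono hx hy hxy
  simp only at hI
  have hIx := abs_le.1 (hIbd x hx)
  have hIy := abs_le.1 (hIbd y hy)
  have hnR : (3 : ℝ) ≤ (n : ℝ) := by exact_mod_cast hn
  set gx := G (l - x) ^ (n - 1)
  set gy := G (l - y) ^ (n - 1)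
  set gL := G l ^ (n - 1)
  -- hkey : gx + ((n:ℝ)-1) * gL * x ≤ gy + ((n:ℝ)-1) * gL * y
  -- goal : gx * I x + C * n * gL * x ≤ gy * I y + C * n * gL * y
  nlinarith [mul_le_mul_of_nonneg_left (sub_le_sub hI (le_refl (C * x))) (by linarith : (0:ℝ) ≤ gy),
    mul_le_mul_of_nonneg_right (sub_nonneg.2 hpyx) (by linarith : (0:ℝ) ≤ C),
    mul_le_mul_of_nonneg_left (sub_nonneg.2 hIx.1) (sub_nonneg.2 hpyx),
    mul_nonneg (sub_nonneg.2 hpyl) (mul_nonneg hC.le (sub_nonneg.2 hxy))]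
end

section
/- Let l > 0 and C ≥ 0 be real numbers, and let J : (0, l) → ℝ be a function such that s ↦ J(s) + C s is monotone increasing on (0, l). Suppose that there is a Lebesgue-null set E ⊂ (0, l) such that for every s ∈ (0, l) \ E one has, in the extended real numbers, liminf_{δ → 0⁺} (J(s+δ) − J(s))/δ ≥ 0. Then J is monotone increasing on (0, l). -/
/-!
Fix `a < b` and `ε > 0`, cover the null set `E` by an open set `U` of measure `< ε`, and put
`m x = |U ∩ (a, x]|` and `φ = J + ε x + |C| m`. Since `J + C x` is monotone, `φ + C x` is monotone,
so `φ` has no downward jumps and `φ a ≤ φ t` at `t = sup {x ∈ [a, b] | φ a ≤ φ x}`. If `t < b`, then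
`φ` increases somewhere to the right of `t`: off `U` by the liminf condition (which the `ε x` term
makes strict), and on `U` because `m` grows at unit rate there, which outweighs the decrease of `J`
at rate at most `|C|`. Hence `t = b`, and `J a ≤ J b + ε (b - a + |C|)` for every `ε > 0`.
-/

open MeasureTheory Filter Set Topology

theorem le_of_monotoneOn_add_mul_of_forall_exists_gt {f : ℝ → ℝ} {a b C : ℝ} (hab : a ≤ b)
    (hf : MonotoneOn (fun x => f x + C * x) (Icc a b))
    (hstep : ∀ x ∈ Ico a b, ∃ y ∈ Ioc x b, f x ≤ f y) : f a ≤ f b := by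
  set S := {x ∈ Icc a b | f a ≤ f x}
  have haS : a ∈ S := ⟨left_mem_Icc.2 hab, le_rfl⟩
  have hSbdd : BddAbove S := ⟨b, fun x hx => hx.1.2⟩
  set t := sSup S
  have ht : t ∈ Icc a b := ⟨le_csSup hSbdd haS, csSup_le ⟨a, haS⟩ fun x hx => hx.1.2⟩
  have hft : f a ≤ f t := by
    have : (𝓝[S] t).NeBot :=
      mem_closure_iff_nhdsWithin_neBot.1 (csSup_mem_closure ⟨a, haS⟩ hSbdd)
    have hlim : Tendsto (fun s => f a + C * s) (𝓝[S] t) (𝓝 (f a + C * t)) :=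
      (Continuous.tendsto (by fun_prop) t).mono_left nhdsWithin_le_nhds
    have hle : ∀ s ∈ S, f a + C * s ≤ f t + C * t := fun s hs =>
      (add_le_add_left hs.2 _).trans (hf hs.1 ht (le_csSup hSbdd hs))
    linarith [le_of_tendsto hlim (eventually_nhdsWithin_of_forall hle)]
  obtain htb | htb := ht.2.eq_or_lt
  · exact htb ▸ hft
  obtain ⟨y, hy, hfy⟩ := hstep t ⟨ht.1, htb⟩
  have hyS : y ∈ S := ⟨⟨ht.1.trans hy.1.le, hy.2⟩, hft.trans hfy⟩
  exact absurd (le_csSup hSbdd hyS) (not_le.2 hy.1)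

theorem volume_real_inter_Ioc_of_Ioc_subset {U : Set ℝ} {a x y : ℝ} (hax : a ≤ x) (hxy : x ≤ y)
    (hU : Ioc x y ⊆ U) :
    volume.real (U ∩ Ioc a y) = volume.real (U ∩ Ioc a x) + (y - x) := by
  have hsplit : U ∩ Ioc a y = (U ∩ Ioc a x) ∪ Ioc x y := by
    rw [← Ioc_union_Ioc_eq_Ioc hax hxy, inter_union_distrib_left, inter_eq_right.2 hU]
  have hdisj : Disjoint (U ∩ Ioc a x) (Ioc x y) :=
    (Ioc_disjoint_Ioc_of_le le_rfl).mono_left inter_subset_right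
  rw [hsplit, measureReal_union hdisj measurableSet_Ioc
    ((measure_mono inter_subset_right).trans_lt measure_Ioc_lt_top).ne measure_Ioc_lt_top.ne,
    Real.volume_real_Ioc_of_le hxy]

theorem eventually_sub_mul_lt_of_liminf_slope_nonneg {f : ℝ → ℝ} {x ε : ℝ} (hε : 0 < ε)
    (h : 0 ≤ liminf (fun δ : ℝ => (((f (x + δ) - f x) / δ : ℝ) : EReal)) (𝓝[>] 0)) :
    ∀ᶠ δ in 𝓝[>] 0, f x - ε * δ < f (x + δ) := by
  have hslope : ∀ᶠ δ in 𝓝[>] (0 : ℝ), ((-ε : ℝ) : EReal) < (((f (x + δ) - f x) / δ : ℝ) : EReal) :=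
    eventually_lt_of_lt_liminf (lt_of_lt_of_le (by exact_mod_cast neg_neg_of_pos hε) h)
      (isBoundedUnder_of ⟨⊥, fun _ => bot_le⟩)
  filter_upwards [hslope, self_mem_nhdsWithin] with δ hδ (hδpos : 0 < δ)
  have := (lt_div_iff₀ hδpos).1 (EReal.coe_lt_coe_iff.1 hδ)
  linarith

theorem monotone_volume_real_inter_Ioc (U : Set ℝ) (a : ℝ) :
    Monotone fun x => volume.real (U ∩ Ioc a x) := fun _ _ hxy =>
  measureReal_mono (inter_subset_inter_right _ (Ioc_subset_Ioc_right hxy))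
    ((measure_mono inter_subset_right).trans_lt measure_Ioc_lt_top).ne

section LiminfSlope

variable {f : ℝ → ℝ} {a b C ε : ℝ} {E U : Set ℝ}

theorem exists_gt_le_of_liminf_slope_nonneg (hε : 0 < ε)
    (hf : MonotoneOn (fun x => f x + C * x) (Icc a b)) (hU : IsOpen U) (hEU : E ⊆ U)
    (hslope : ∀ x ∈ Ico a b \ E,
      0 ≤ liminf (fun δ : ℝ => (((f (x + δ) - f x) / δ : ℝ) : EReal)) (𝓝[>] 0))
    {x : ℝ} (hx : x ∈ Ico a b) :
    ∃ y ∈ Ioc x b, f x + ε * x + |C| * volume.real (U ∩ Ioc a x) ≤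
      f y + ε * y + |C| * volume.real (U ∩ Ioc a y) := by
  by_cases hxE : x ∈ E
  · obtain ⟨u, hxu, huU⟩ := mem_nhdsGE_iff_exists_Icc_subset.1
      (mem_nhdsWithin_of_mem_nhds (hU.mem_nhds (hEU hxE)))
    set y := min u b
    have hxy : x < y := lt_min hxu hx.2
    have hmy := volume_real_inter_Ioc_of_Ioc_subset hx.1 hxy.le
      (Ioc_subset_Icc_self.trans ((Icc_subset_Icc_right (min_le_left u b)).trans huU))
    have hfy := hf (Ico_subset_Icc_self hx) ⟨hx.1.trans hxy.le, min_le_right u b⟩ hxy.le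
    refine ⟨y, ⟨hxy, min_le_right u b⟩, ?_⟩
    rw [hmy]
    nlinarith [mul_le_mul_of_nonneg_right (le_abs_self C) (sub_nonneg.2 hxy.le)]
  · obtain ⟨δ, hδ, hδb, hδpos⟩ := ((eventually_sub_mul_lt_of_liminf_slope_nonneg hε
      (hslope x ⟨hx, hxE⟩)).and ((eventually_lt_nhds (sub_pos.2 hx.2)).filter_mono
      nhdsWithin_le_nhds |>.and self_mem_nhdsWithin)).exists
    have hδpos : (0 : ℝ) < δ := hδpos
    refine ⟨x + δ, ⟨by linarith, by linarith⟩, ?_⟩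
    have hm := monotone_volume_real_inter_Ioc U a (by linarith : x ≤ x + δ)
    nlinarith [abs_nonneg C]

theorem le_add_mul_of_liminf_slope_nonneg (hε : 0 < ε) (hab : a ≤ b)
    (hf : MonotoneOn (fun x => f x + C * x) (Icc a b)) (hE : volume E = 0)
    (hslope : ∀ x ∈ Ico a b \ E,
      0 ≤ liminf (fun δ : ℝ => (((f (x + δ) - f x) / δ : ℝ) : EReal)) (𝓝[>] 0)) :
    f a ≤ f b + ε * (b - a + |C|) := by
  obtain ⟨U, hEU, hU, hUε⟩ := E.exists_isOpen_lt_of_lt (μ := volume) (ENNReal.ofReal ε)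
    (by simpa [hE])
  set m := fun x => volume.real (U ∩ Ioc a x)
  have hφ_mono : MonotoneOn (fun x => f x + ε * x + |C| * m x + C * x) (Icc a b) := by
    refine ((hf.add ((monotone_id.const_mul hε.le).monotoneOn _)).add
      (((monotone_volume_real_inter_Ioc U a).const_mul (abs_nonneg C)).monotoneOn _)).congr
      fun x _ => ?_
    simp only [id]
    ring
  have hφab := le_of_monotoneOn_add_mul_of_forall_exists_gt hab hφ_mono
    fun x hx => exists_gt_le_of_liminf_slope_nonneg hε hf hU hEU hslope hx
  have hma : m a = 0 := by simp [m]
  have hmb : m b ≤ ε :=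
    (measureReal_mono inter_subset_left hUε.ne_top).trans
      (ENNReal.toReal_le_of_le_ofReal hε.le hUε.le)
  rw [hma] at hφab
  nlinarith [mul_le_mul_of_nonneg_left hmb (abs_nonneg C)]

theorem le_of_liminf_slope_nonneg (hab : a ≤ b)
    (hf : MonotoneOn (fun x => f x + C * x) (Icc a b)) (hE : volume E = 0)
    (hslope : ∀ x ∈ Ico a b \ E,
      0 ≤ liminf (fun δ : ℝ => (((f (x + δ) - f x) / δ : ℝ) : EReal)) (𝓝[>] 0)) :
    f a ≤ f b := by
  have hlim : Tendsto (fun ε => f b + ε * (b - a + |C|)) (𝓝 0) (𝓝 (f b)) := by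
    simpa using ((tendsto_id (x := 𝓝 (0 : ℝ))).mul_const (b - a + |C|)).const_add (f b)
  exact ge_of_tendsto (hlim.mono_left (nhdsWithin_le_nhds (s := Ioi 0)))
    (eventually_nhdsWithin_of_forall fun ε hε =>
      le_add_mul_of_liminf_slope_nonneg hε hab hf hE hslope)

end LiminfSlope

theorem stmt_10_general (l C : ℝ) (J : ℝ → ℝ)
    (hmono : MonotoneOn (fun s => J s + C * s) (Set.Ioo 0 l))
    (E : Set ℝ) (hE0 : MeasureTheory.volume E = 0)
    (h : ∀ s ∈ Set.Ioo 0 l \ E,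
      (0 : EReal) ≤
        Filter.liminf (fun δ : ℝ => (((J (s + δ) - J s) / δ : ℝ) : EReal))
          (nhdsWithin 0 (Set.Ioi 0))) :
    MonotoneOn J (Set.Ioo 0 l) := by
  intro a ha b hb hab
  have hsub : Icc a b ⊆ Ioo 0 l := ordConnected_Ioo.out ha hb
  exact le_of_liminf_slope_nonneg hab (hmono.mono hsub) hE0
    fun x hx => h x ⟨hsub (Ico_subset_Icc_self hx.1), hx.2⟩

/-- Let `l > 0` and `C ≥ 0` be real numbers, and let `J : (0, l) → ℝ` be a function such
that `s ↦ J(s) + C s` is monotone increasing on `(0, l)`. Suppose that there is a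
Lebesgue-null set `E ⊆ (0, l)` such that for every `s ∈ (0, l) \ E` one has, in the
extended real numbers, `liminf_{δ → 0⁺} (J(s+δ) - J(s))/δ ≥ 0`. Then `J` is monotone
increasing on `(0, l)`. -/
theorem stmt_10 (l C : ℝ) (hl : 0 < l) (hC : 0 ≤ C) (J : ℝ → ℝ)
    (hmono : MonotoneOn (fun s => J s + C * s) (Set.Ioo 0 l))
    (E : Set ℝ) (hE : E ⊆ Set.Ioo 0 l) (hE0 : MeasureTheory.volume E = 0)
    (h : ∀ s ∈ Set.Ioo 0 l \ E,
      (0 : EReal) ≤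
        Filter.liminf (fun δ : ℝ => (((J (s + δ) - J s) / δ : ℝ) : EReal))
          (nhdsWithin 0 (Set.Ioi 0))) :
    MonotoneOn J (Set.Ioo 0 l) :=
  stmt_10_general l C J hmono E hE0 h
end

section
/- Fix an integer n ≥ 3 and a real number l > 0. Let w : [0, l] → ℝ be a twice differentiable function satisfying −w''(s) − (n/(2(n−1))) w'(s)² + n(n−1)/2 ≥ 0 for every s ∈ [0, l]. Then min{ −w'(0), w'(l) } ≤ n − 1. -/
/-!
Write `a = n - 1`. Since `n(n-1)/2 = (n/(2(n-1))) a²`, the hypothesis says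
`w'' ≤ (n/(2(n-1))) (a² - w'²)`, so `w'' ≤ 0` wherever `w' < -a`. Hence if `w'(0) < -a`, then `w'`
can never climb back up to `-a`, and in particular `w'(l) < -a < a`.
-/

open Set

lemma lt_of_deriv_nonpos_of_lt {f f' : ℝ → ℝ} {a b c : ℝ} (hf : ContinuousOn f (Icc a b))
    (hf' : ∀ x ∈ Ioo a b, HasDerivAt f (f' x) x) (hneg : ∀ x ∈ Ioo a b, f x < c → f' x ≤ 0)
    (ha : f a < c) : ∀ x ∈ Icc a b, f x < c := by
  by_contra! hx
  obtain ⟨x, hx, hcx⟩ := hx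
  set S := Icc a b ∩ f ⁻¹' Ici c
  have hSclosed : IsClosed S := hf.preimage_isClosed_of_isClosed isClosed_Icc isClosed_Ici
  have hSbdd : BddBelow S := ⟨a, fun y hy => hy.1.1⟩
  set t := sInf S
  obtain ⟨⟨hat, htb⟩, hct⟩ : t ∈ S := hSclosed.csInf_mem ⟨x, hx, hcx⟩ hSbdd
  have hbefore : ∀ y ∈ Ico a t, f y < c := fun y hy => by
    by_contra! hcy
    exact hy.2.not_ge (csInf_le hSbdd ⟨⟨hy.1, hy.2.le.trans htb⟩, hcy⟩)
  have hanti : AntitoneOn f (Icc a t) := by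
    refine antitoneOn_of_hasDerivWithinAt_nonpos (convex_Icc a t)
      (hf.mono (Icc_subset_Icc_right htb)) (f' := f') (fun y hy => ?_) (fun y hy => ?_)
    all_goals rw [interior_Icc] at hy
    · exact (hf' y ⟨hy.1, hy.2.trans_le htb⟩).hasDerivWithinAt
    · exact hneg y ⟨hy.1, hy.2.trans_le htb⟩ (hbefore y (Ioo_subset_Ico_self hy))
  have hfta : f t ≤ f a := hanti (left_mem_Icc.2 hat) (right_mem_Icc.2 hat) hat
  exact (hct.trans hfta).not_gt ha

lemma nonpos_of_le_sq_of_riccati_ineq {n x y : ℝ} (hn : 1 < n)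
    (hineq : 0 ≤ -y - n / (2 * (n - 1)) * x ^ 2 + n * (n - 1) / 2) (hx : (n - 1) ^ 2 ≤ x ^ 2) :
    y ≤ 0 := by
  have hconst : n * (n - 1) / 2 = n / (2 * (n - 1)) * (n - 1) ^ 2 := by
    field_simp [(sub_pos.2 hn).ne']
  have hcoeff : 0 ≤ n / (2 * (n - 1)) := by
    have : 0 < n - 1 := sub_pos.2 hn
    positivity
  nlinarith [mul_nonneg hcoeff (sub_nonneg.2 hx)]

theorem stmt_12_general (n : ℕ) (hn : 3 ≤ n) (l : ℝ) (hl : 0 < l)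
    (w' w'' : ℝ → ℝ)
    (hderiv' : ∀ s ∈ Set.Icc 0 l, HasDerivWithinAt w' (w'' s) (Set.Icc 0 l) s)
    (hineq : ∀ s ∈ Set.Icc 0 l,
      0 ≤ -w'' s - ((n : ℝ) / (2 * ((n : ℝ) - 1))) * (w' s) ^ 2 + (n : ℝ) * ((n : ℝ) - 1) / 2) :
    min (-(w' 0)) (w' l) ≤ (n : ℝ) - 1 := by
  have hn1 : (1 : ℝ) < n := by exact_mod_cast (by omega : 1 < n)
  by_contra! h
  obtain ⟨h0, hL⟩ := lt_min_iff.1 h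
  have hconcave : ∀ s ∈ Ioo 0 l, w' s < -((n : ℝ) - 1) → w'' s ≤ 0 := fun s hs hs' =>
    nonpos_of_le_sq_of_riccati_ineq hn1 (hineq s (Ioo_subset_Icc_self hs)) (by nlinarith)
  have hstay := lt_of_deriv_nonpos_of_lt (fun s hs => (hderiv' s hs).continuousWithinAt)
    (fun s hs => (hderiv' s (Ioo_subset_Icc_self hs)).hasDerivAt (Icc_mem_nhds hs.1 hs.2))
    hconcave (by linarith) l (right_mem_Icc.2 hl.le)
  linarith

/-- Fix an integer `n ≥ 3` and a real number `l > 0`. Let `w : [0, l] → ℝ` be a twice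
differentiable function (with one-sided derivatives at the endpoints) satisfying
`-w''(s) - (n/(2(n-1))) w'(s)² + n(n-1)/2 ≥ 0` for every `s ∈ [0, l]`. Then
`min{-w'(0), w'(l)} ≤ n - 1`. -/
theorem stmt_12 (n : ℕ) (hn : 3 ≤ n) (l : ℝ) (hl : 0 < l)
    (w w' w'' : ℝ → ℝ)
    (hderiv : ∀ s ∈ Set.Icc 0 l, HasDerivWithinAt w (w' s) (Set.Icc 0 l) s)
    (hderiv' : ∀ s ∈ Set.Icc 0 l, HasDerivWithinAt w' (w'' s) (Set.Icc 0 l) s)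
    (hineq : ∀ s ∈ Set.Icc 0 l,
      0 ≤ -w'' s - ((n : ℝ) / (2 * ((n : ℝ) - 1))) * (w' s) ^ 2 + (n : ℝ) * ((n : ℝ) - 1) / 2) :
    min (-(w' 0)) (w' l) ≤ (n : ℝ) - 1 :=
  stmt_12_general n hn l hl w' w'' hderiv' hineq
end

section
/- Let E be a real inner product space, let K be a complete subspace of E, and let P : E → E denote the orthogonal projection onto K. Then for every positive integer m and all vectors v₁, …, v_m ∈ E, the Gram determinants satisfy det(⟨P v_i, P v_j⟩)_{1 ≤ i,j ≤ m} ≤ det(⟨v_i, v_j⟩)_{1 ≤ i,j ≤ m}. -/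
/-!
Since `v i = P v i + (v i - P v i)` with the two summands orthogonal, the Gram matrix of `v` is the
sum of the Gram matrices of `P ∘ v` and of `v - P ∘ v`, both positive semidefinite. The
determinant is monotone under adding a positive semidefinite matrix `B = Cᴴ C`: for invertible `A`
the matrix determinant lemma gives `det (A + Cᴴ C) = det A * det (1 + C A⁻¹ Cᴴ)`, and the last
factor is at least `1` because all eigenvalues of `1 + C A⁻¹ Cᴴ` are.
-/

open RealInnerProductSpace

open scoped InnerProductSpace ComplexOrder MatrixOrder

namespace Matrix

section Determinant

variable {𝕜 n : Type*} [RCLike 𝕜] [Fintype n] [DecidableEq n]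

theorem PosSemidef.one_le_det_one_add {M : Matrix n n 𝕜} (hM : M.PosSemidef) :
    1 ≤ (1 + M).det := by
  have hH : (1 + M).IsHermitian := isHermitian_one.add hM.isHermitian
  have one_le_eigenvalue (i : n) : 1 ≤ hH.eigenvalues i := by
    have hmem : hH.eigenvalues i - 1 ∈ spectrum ℝ M := by
      rw [← spectrum.add_mem_add_iff (s := 1), map_one, sub_add_cancel]
      exact hH.eigenvalues_mem_spectrum_real i
    exact sub_nonneg.mp (spectrum_nonneg_of_nonneg hM.nonneg hmem)
  rw [hH.det_eq_prod_eigenvalues, ← RCLike.ofReal_prod, ← RCLike.ofReal_one,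
    RCLike.ofReal_le_ofReal]
  exact Finset.one_le_prod fun i _ => one_le_eigenvalue i

theorem PosSemidef.det_le_det_add {A B : Matrix n n 𝕜} (hA : A.PosSemidef) (hB : B.PosSemidef) :
    A.det ≤ (A + B).det := by
  by_cases hdet : A.det = 0
  · exact hdet ▸ (hA.add hB).det_nonneg
  obtain ⟨C, rfl⟩ := CStarAlgebra.nonneg_iff_eq_star_mul_self.mp hB.nonneg
  rw [det_add_mul _ _ (isUnit_iff_ne_zero.mpr hdet)]
  calc A.det = A.det * 1 := (mul_one _).symm
    _ ≤ _ := mul_le_mul_of_nonneg_left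
      (hA.inv.mul_mul_conjTranspose_same C).one_le_det_one_add hA.det_nonneg

end Determinant

theorem gram_add_of_inner_eq_zero {𝕜 E n : Type*} [RCLike 𝕜] [NormedAddCommGroup E]
    [InnerProductSpace 𝕜 E] {u w : n → E} (h : ∀ i j, ⟪u i, w j⟫_𝕜 = 0) :
    gram 𝕜 (u + w) = gram 𝕜 u + gram 𝕜 w := by
  ext i j
  simp [inner_add_left, inner_add_right, h, inner_eq_zero_symm.mp (h j i)]

end Matrix

theorem Submodule.det_gram_starProjection_le {𝕜 E n : Type*} [RCLike 𝕜] [NormedAddCommGroup E]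
    [InnerProductSpace 𝕜 E] [Fintype n] [DecidableEq n] (K : Submodule 𝕜 E)
    [K.HasOrthogonalProjection] (v : n → E) :
    (Matrix.gram 𝕜 (K.starProjection ∘ v)).det ≤ (Matrix.gram 𝕜 v).det := by
  have hsplit : v = K.starProjection ∘ v + fun i => v i - K.starProjection (v i) := by
    ext
    simp
  have horth (i j : n) : ⟪K.starProjection (v i), v j - K.starProjection (v j)⟫_𝕜 = 0 :=
    K.sub_starProjection_mem_orthogonal (v j) _ (K.starProjection_apply_mem (v i))
  conv_rhs => rw [hsplit, Matrix.gram_add_of_inner_eq_zero (u := K.starProjection ∘ v) horth]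
  exact (Matrix.posSemidef_gram 𝕜 _).det_le_det_add (Matrix.posSemidef_gram 𝕜 _)

theorem stmt_13_general {E : Type*} [NormedAddCommGroup E] [InnerProductSpace ℝ E]
    (K : Submodule ℝ E) [CompleteSpace K] (m : ℕ) (v : Fin m → E) :
    (Matrix.of fun i j : Fin m =>
        ⟪((K.orthogonalProjectionOnto (v i) : K) : E), ((K.orthogonalProjectionOnto (v j) : K) : E)⟫).det ≤
    (Matrix.of fun i j : Fin m => ⟪v i, v j⟫).det :=
  K.det_gram_starProjection_le v

/-- Let `E` be a real inner product space, let `K` be a complete subspace of `E`, and let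
`P : E → E` denote the orthogonal projection onto `K`. Then for every positive integer `m`
and all vectors `v₁, …, v_m ∈ E`, the Gram determinants satisfy
`det(⟨P vᵢ, P vⱼ⟩) ≤ det(⟨vᵢ, vⱼ⟩)`. -/
theorem stmt_13 {E : Type*} [NormedAddCommGroup E] [InnerProductSpace ℝ E]
    (K : Submodule ℝ E) [CompleteSpace K] (m : ℕ) (hm : 0 < m) (v : Fin m → E) :
    (Matrix.of fun i j : Fin m =>
        ⟪((K.orthogonalProjectionOnto (v i) : K) : E), ((K.orthogonalProjectionOnto (v j) : K) : E)⟫).det ≤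
    (Matrix.of fun i j : Fin m => ⟪v i, v j⟫).det :=
  stmt_13_general K m v
end

section
/- Fix an integer n ≥ 3 and real numbers x ≥ 1, P > 0, and T > 0. If x^{n−1} ( −(n−1) (1 − x⁻ⁿ)^{1/2} P + T + (n−1) P ) ≤ 2π, then 2 P^{n−1} T ≤ (4π/n)ⁿ. -/
open Real

/-! With `y = x⁻ⁿ ≤ 1` we have `√(1 - y) ≤ 1 - y / 2`, so the hypothesis gives
`(n - 1) u + v ≤ 2π` with `u = P / (2x)` and `v = T xⁿ⁻¹`. By AM-GM with weights
`(n - 1) / n` and `1 / n`, `uⁿ⁻¹ v ≤ (2π / n)ⁿ`, and `uⁿ⁻¹ v = Pⁿ⁻¹ T / 2ⁿ⁻¹`. -/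

theorem Real.sqrt_one_sub_le_one_sub_half {y : ℝ} (hy : y ≤ 2) : √(1 - y) ≤ 1 - y / 2 :=
  Real.sqrt_le_iff.mpr ⟨by linarith, by nlinarith [sq_nonneg y]⟩

theorem Real.pow_mul_le_mean_pow (m : ℕ) {u v : ℝ} (hu : 0 ≤ u) (hv : 0 ≤ v) :
    u ^ m * v ≤ ((m * u + v) / (m + 1)) ^ (m + 1) := by
  have hm : (0 : ℝ) < m + 1 := by positivity
  have hweights : (m : ℝ) / (m + 1) + 1 / (m + 1) = 1 := by field_simp
  have hamgm := geom_mean_le_arith_mean2_weighted (p₁ := u) (p₂ := v)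
    (by positivity) (by positivity) hu hv hweights
  have hgeom : (u ^ ((m : ℝ) / (m + 1)) * v ^ (1 / ((m : ℝ) + 1))) ^ (m + 1) = u ^ m * v := by
    rw [mul_pow, ← rpow_natCast, ← rpow_natCast (v ^ _), ← rpow_mul hu, ← rpow_mul hv]
    push_cast
    rw [div_mul_cancel₀ _ hm.ne', one_div_mul_cancel hm.ne', rpow_natCast, rpow_one]
  calc u ^ m * v = (u ^ ((m : ℝ) / (m + 1)) * v ^ (1 / ((m : ℝ) + 1))) ^ (m + 1) := hgeom.symm
    _ ≤ ((m : ℝ) / (m + 1) * u + 1 / (m + 1) * v) ^ (m + 1) := by gcongr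
    _ = ((m * u + v) / (m + 1)) ^ (m + 1) := by ring

theorem Real.pow_mul_le_of_mul_add_le (m : ℕ) {u v c : ℝ} (hu : 0 ≤ u) (hv : 0 ≤ v)
    (h : m * u + v ≤ c) : u ^ m * v ≤ (c / (m + 1)) ^ (m + 1) :=
  (pow_mul_le_mean_pow m hu hv).trans (by gcongr)

/-- Fix an integer `n ≥ 3` and real numbers `x ≥ 1`, `P > 0`, and `T > 0`. If
`x^{n-1} (-(n-1)(1 - x⁻ⁿ)^{1/2} P + T + (n-1) P) ≤ 2π`, then
`2 P^{n-1} T ≤ (4π/n)ⁿ`. -/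
theorem stmt_15 (n : ℕ) (hn : 3 ≤ n) (x P T : ℝ) (hx : 1 ≤ x) (hP : 0 < P) (hT : 0 < T)
    (h : x ^ (n - 1) *
        (-(((n : ℝ) - 1) * Real.sqrt (1 - (x ^ n)⁻¹) * P) + T + ((n : ℝ) - 1) * P) ≤
      2 * Real.pi) :
    2 * P ^ (n - 1) * T ≤ (4 * Real.pi / n) ^ n := by
  obtain ⟨m, rfl⟩ : ∃ m, n = m + 1 := Nat.exists_eq_add_of_le' (by omega)
  simp only [Nat.add_sub_cancel, Nat.cast_succ, add_sub_cancel_right] at h ⊢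
  have hx0 : 0 < x := by linarith
  have hsqrt := sqrt_one_sub_le_one_sub_half
    (inv_le_one_of_one_le₀ (one_le_pow₀ hx : 1 ≤ x ^ (m + 1)) |>.trans one_le_two)
  have hsum : m * (P / (2 * x)) + T * x ^ m ≤ 2 * π :=
    calc m * (P / (2 * x)) + T * x ^ m
        = x ^ m * (m * P * ((x ^ (m + 1))⁻¹ / 2) + T) := by field_simp; ring
      _ ≤ x ^ m * (-(m * √(1 - (x ^ (m + 1))⁻¹) * P) + T + m * P) := by
        refine mul_le_mul_of_nonneg_left ?_ (by positivity)
        nlinarith [mul_le_mul_of_nonneg_left hsqrt (by positivity : (0 : ℝ) ≤ m * P)]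
      _ ≤ 2 * π := h
  calc 2 * P ^ m * T = 2 ^ (m + 1) * ((P / (2 * x)) ^ m * (T * x ^ m)) := by
        rw [div_pow, mul_pow]; field_simp; ring
    _ ≤ 2 ^ (m + 1) * (2 * π / (m + 1)) ^ (m + 1) := by
        gcongr; exact pow_mul_le_of_mul_add_le m (by positivity) (by positivity) hsum
    _ = (4 * π / (m + 1)) ^ (m + 1) := by rw [← mul_pow]; ring
end

section
/- Let l > 0, C > 0, and B > 0 be real numbers, and let h : (0, l) → [0, ∞) be a function with h(s) ≤ B for all s ∈ (0, l) such that s ↦ e^{−C s} h(s) is monotone decreasing on (0, l). Then the function s ↦ h(s) − C B e^{C l} s is monotone decreasing on (0, l). -/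
open Real Set

/-- Let `l > 0`, `C > 0`, and `B > 0` be real numbers, and let `h : (0, l) → [0, ∞)` be a
function with `h(s) ≤ B` for all `s ∈ (0, l)` such that `s ↦ e^{-C s} h(s)` is monotone
decreasing on `(0, l)`. Then the function `s ↦ h(s) - C B e^{C l} s` is monotone
decreasing on `(0, l)`. -/
theorem stmt_17 (l C B : ℝ) (hl : 0 < l) (hC : 0 < C) (hB : 0 < B)
    (h : ℝ → ℝ) (h0 : ∀ s ∈ Set.Ioo 0 l, 0 ≤ h s) (hhB : ∀ s ∈ Set.Ioo 0 l, h s ≤ B)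
    (hmono : AntitoneOn (fun s => Real.exp (-C * s) * h s) (Set.Ioo 0 l)) :
    AntitoneOn (fun s => h s - C * B * Real.exp (C * l) * s) (Set.Ioo 0 l) := by
  intro x hx y hy hxy
  simp only
  have hyx : 0 ≤ y - x := sub_nonneg.2 hxy
  have key := hmono hx hy hxy
  simp only at key
  have htnn : 0 ≤ C * (y - x) := by positivity
  have h1 : h y ≤ Real.exp (C * (y - x)) * h x := by
    have hm := mul_le_mul_of_nonneg_left key (Real.exp_pos (C * y)).le
    have e1 : Real.exp (C * y) * (Real.exp (-C * y) * h y) = h y := by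
      rw [← mul_assoc, ← Real.exp_add]
      norm_num
    have e2 : Real.exp (C * y) * (Real.exp (-C * x) * h x) = Real.exp (C * (y - x)) * h x := by
      rw [← mul_assoc, ← Real.exp_add]
      ring_nf
    rw [e1, e2] at hm
    exact hm
  have h2 : Real.exp (C * (y - x)) - 1 ≤ C * (y - x) * Real.exp (C * (y - x)) := by
    have hadd := Real.add_one_le_exp (-(C * (y - x)))
    have hprod : Real.exp (C * (y - x)) * Real.exp (-(C * (y - x))) = 1 := by
      rw [← Real.exp_add]; simp
    nlinarith [mul_le_mul_of_nonneg_left hadd (Real.exp_pos (C * (y - x))).le]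
  have h3 : Real.exp (C * (y - x)) ≤ Real.exp (C * l) := by
    apply Real.exp_le_exp.2
    have : y - x ≤ l := by nlinarith [hx.1, hy.2]
    nlinarith
  have hxB := hhB x hx
  have hx0 := h0 x hx
  nlinarith [mul_nonneg (sub_nonneg.2 (Real.one_le_exp htnn)) (sub_nonneg.2 hxB),
    mul_le_mul_of_nonneg_right h2 hB.le,
    mul_le_mul_of_nonneg_right (mul_le_mul_of_nonneg_left h3 htnn) hB.le]
end
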